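/- Let H be an n×n graph Hadamard matrix with n ≥ 30, and let F be the real 2-uniform (n,k)-frame with signature matrix Q = I − H (so k = (n − √n)/2). Then the graph G_F contains an induced complete bipartite subgraph on 5 vertices, and consequently e_m^∞(F) = k/n + (m−1)·c_{n,k} for all m ≤ 5. -/

import Mathlib

open Matrix
open scoped Classical

noncomputable section

namespace FramesErasures

/-- The constant `c_{n,k} = sqrt(k(n-k)/(n^2(n-1)))`. -/
noncomputable def c (n k : ℕ) : ℝ :=
  Real.sqrt ((k : ℝ) * ((n : ℝ) - k) / ((n : ℝ) ^ 2 * ((n : ℝ) - 1)))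

/-- Operator norm (ℓ²→ℓ²) of a square real matrix. -/
noncomputable def opNorm {k : ℕ} (A : Matrix (Fin k) (Fin k) ℝ) : ℝ :=
  ‖Matrix.toEuclideanCLM (𝕜 := ℝ) A‖

/-- The diagonal 0-1 matrix with 1's exactly at the positions in `S`. -/
def diagS {n : ℕ} (S : Finset (Fin n)) : Matrix (Fin n) (Fin n) ℝ :=
  Matrix.diagonal fun i => if i ∈ S then 1 else 0

/-- `e_m^∞(F)`: the maximal norm of an error operator for `m` erasures. -/
noncomputable def errInf {n k : ℕ} (V : Matrix (Fin n) (Fin k) ℝ) (m : ℕ) : ℝ :=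
  sSup {x : ℝ | ∃ S : Finset (Fin n), S.card = m ∧ x = opNorm (Vᵀ * diagS S * V)}

/-- `e_m^p(F)`: the ℓᵖ-average of the norms of the error operators for `m` erasures. -/
noncomputable def errP {n k : ℕ} (V : Matrix (Fin n) (Fin k) ℝ) (m : ℕ) (p : ℝ) : ℝ :=
  ((n.choose m : ℝ)⁻¹ *
      ∑ S ∈ Finset.univ.filter fun S : Finset (Fin n) => S.card = m,
        opNorm (Vᵀ * diagS S * V) ^ p) ^ (1 / p)

/-- A Parseval frame is uniform if all diagonal Grammian entries equal `k/n`. -/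
def Uniform (n k : ℕ) (V : Matrix (Fin n) (Fin k) ℝ) : Prop :=
  ∀ j, (V * Vᵀ) j j = (k : ℝ) / n

/-- 2-uniformity, via the equiangularity characterization. -/
def TwoUniform (n k : ℕ) (V : Matrix (Fin n) (Fin k) ℝ) : Prop :=
  Uniform n k V ∧ ∀ i j, i ≠ j → |(V * Vᵀ) i j| = c n k

/-- The `n×n` all-ones matrix. -/
def Jmat (n : ℕ) : Matrix (Fin n) (Fin n) ℝ :=
  Matrix.of fun _ _ => 1

/-- A real 2-uniform `(n,k)`-frame, given by its analysis operator and signature matrix. -/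
structure TwoUniformFrame (n k : ℕ) where
  V : Matrix (Fin n) (Fin k) ℝ
  Q : Matrix (Fin n) (Fin n) ℝ
  parseval : Vᵀ * V = 1
  symm : Qᵀ = Q
  diag : ∀ i, Q i i = 0
  offdiag : ∀ i j, i ≠ j → Q i j = 1 ∨ Q i j = -1
  gram : V * Vᵀ = ((k : ℝ) / n) • (1 : Matrix (Fin n) (Fin n) ℝ) + c n k • Q

/-- The graph associated with a 2-uniform frame: `i ≠ j` adjacent iff `Q i j = -1`. -/
def frameGraph {n k : ℕ} (F : TwoUniformFrame n k) : SimpleGraph (Fin n) where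
  Adj i j := i ≠ j ∧ F.Q i j = -1
  symm := by
    refine ⟨?_⟩
    intro i j h
    refine ⟨h.1.symm, ?_⟩
    have h2 : F.Q i j = F.Q j i := by
      have := congrFun (congrFun F.symm j) i
      simpa [Matrix.transpose_apply] using this
    rw [← h2]
    exact h.2
  loopless := ⟨fun i h => h.1 rfl⟩

/-- A graph is complete bipartite (with one part possibly empty). -/
def IsCompleteBipartite {α : Type*} (G : SimpleGraph α) : Prop :=
  ∃ A : Set α, ∀ i j, G.Adj i j ↔ ((i ∈ A) ↔ (j ∉ A))

/-- `G` has an induced complete bipartite subgraph on `m` vertices. -/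
def HasInducedCompleteBipartite {n : ℕ} (G : SimpleGraph (Fin n)) (m : ℕ) : Prop :=
  ∃ S : Finset (Fin n), S.card = m ∧
    IsCompleteBipartite (G.induce (S : Set (Fin n)))

/-- The Seidel adjacency matrix of a graph. -/
noncomputable def seidel {α : Type*} [DecidableEq α] (G : SimpleGraph α) : Matrix α α ℝ :=
  Matrix.of fun i j => if i = j then 0 else if G.Adj i j then -1 else 1

/-- Switching equivalence of graphs: Seidel matrices conjugate by a product of a permutation
and a `±1` diagonal matrix. -/
def SwitchingEquivalent {α : Type*} [DecidableEq α] (G H : SimpleGraph α) : Prop :=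
  ∃ (σ : Equiv.Perm α) (ε : α → ℝ), (∀ i, ε i = 1 ∨ ε i = -1) ∧
    ∀ i j, seidel H i j = ε i * ε j * seidel G (σ i) (σ j)

/-- `G ∈ 𝒢_m^(s)`: the minimal number of edges in the switching class of `G` equals `s`. -/
def MinSwitchEdges {α : Type*} [DecidableEq α] (G : SimpleGraph α) (s : ℕ) : Prop :=
  IsLeast {t : ℕ | ∃ H : SimpleGraph α, SwitchingEquivalent G H ∧ H.edgeSet.ncard = t} s

/-- `lam` is the largest eigenvalue of the real matrix `A`. -/
def IsMaxEigenvalue {m : ℕ} (A : Matrix (Fin m) (Fin m) ℝ) (lam : ℝ) : Prop :=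
  (∃ v : Fin m → ℝ, v ≠ 0 ∧ A.mulVec v = lam • v) ∧
  ∀ μ : ℝ, (∃ v : Fin m → ℝ, v ≠ 0 ∧ A.mulVec v = μ • v) → μ ≤ lam

/-- A 2-uniform frame is 3-uniform if the error norm is the same for all triple erasures. -/
def ThreeUniform {n k : ℕ} (F : TwoUniformFrame n k) : Prop :=
  ∀ S T : Finset (Fin n), S.card = 3 → T.card = 3 →
    opNorm (F.Vᵀ * diagS S * F.V) = opNorm (F.Vᵀ * diagS T * F.V)

/-!
Switching `H` by the signs of a row `z` makes that row all ones. In the graph `p ~ q ↔ H p q = -1`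
on the remaining vertices, orthogonality of the rows gives every vertex `n/2` neighbours and any two
distinct vertices `n/4` common neighbours. If the `n/4` common neighbours of an edge `uv` were
independent, a Cauchy–Schwarz count of their neighbourhoods would force `(n/4 + 1)² ≤ n`, i.e.
`n = 4`. So there is a 4-clique, and together with `z` it gives five vertices on which `Q = I - H`
agrees off the diagonal with a rank-one sign matrix `ε εᵀ`; these span an induced complete
bipartite subgraph of `G_F`.

For the error operators, `‖Vᵀ D V‖ = ‖D (V Vᵀ) D‖`. The Schur test bounds this by the absolute row
sums `k/n + (m - 1) c_{n,k}`, and on a set where `Q = ε εᵀ` the vector `D ε` is an eigenvector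
with exactly that eigenvalue.
-/

open Finset
open scoped Matrix.Norms.L2Operator

lemma l2_opNorm_le_of_sum_abs_le {m n : Type*} [Fintype m] [Fintype n] [DecidableEq n]
    (A : Matrix m n ℝ) {r : ℝ} (hr : 0 ≤ r) (hrow : ∀ i, ∑ j, |A i j| ≤ r)
    (hcol : ∀ j, ∑ i, |A i j| ≤ r) : ‖A‖ ≤ r := by
  rw [l2_opNorm_def]
  refine ContinuousLinearMap.opNorm_le_of_re_inner_le hr fun x y hx hy => ?_
  have hx2 : ∑ j, x j ^ 2 = 1 := by rw [← EuclideanSpace.real_norm_sq_eq, hx, one_pow]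
  have hy2 : ∑ i, y i ^ 2 = 1 := by rw [← EuclideanSpace.real_norm_sq_eq, hy, one_pow]
  have hterm : ∀ i j, A i j * x j * y i ≤ |A i j| * (x j ^ 2 + y i ^ 2) / 2 := fun i j => by
    have := two_mul_le_add_sq |x j| |y i|
    rw [sq_abs, sq_abs] at this
    calc A i j * x j * y i ≤ |A i j * x j * y i| := le_abs_self _
      _ = |A i j| * (|x j| * |y i|) := by rw [abs_mul, abs_mul, mul_assoc]
      _ ≤ |A i j| * (x j ^ 2 + y i ^ 2) / 2 := by
        rw [mul_div_assoc]; gcongr; linarith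
  calc RCLike.re (inner ℝ (toEuclideanLin A x) y : ℝ) = ∑ i, ∑ j, A i j * x j * y i := by
        simp [toLpLin_apply, PiLp.inner_apply, mulVec, dotProduct, mul_sum, mul_comm]
    _ ≤ ∑ i, ∑ j, |A i j| * (x j ^ 2 + y i ^ 2) / 2 := by gcongr with i _ j _; exact hterm i j
    _ = ((∑ j, (∑ i, |A i j|) * x j ^ 2) + ∑ i, (∑ j, |A i j|) * y i ^ 2) / 2 := by
        simp only [mul_add, add_div, sum_add_distrib, sum_mul, sum_div]
        rw [sum_comm]
    _ ≤ ((∑ j, r * x j ^ 2) + ∑ i, r * y i ^ 2) / 2 := by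
        gcongr with j _ i _
        · exact hcol j
        · exact hrow i
    _ = r := by rw [← mul_sum, ← mul_sum, hx2, hy2]; ring

lemma abs_le_l2_opNorm_of_mulVec_eq_smul {ι : Type*} [Fintype ι] [DecidableEq ι]
    {A : Matrix ι ι ℝ} {w : ι → ℝ} (hw : w ≠ 0) {μ : ℝ} (h : A *ᵥ w = μ • w) : |μ| ≤ ‖A‖ := by
  have hpos : 0 < ‖WithLp.toLp 2 w‖ := norm_pos_iff.mpr (by simpa using hw)
  have := l2_opNorm_mulVec A (WithLp.toLp 2 w)
  rw [WithLp.ofLp_toLp, h] at this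
  have e : (EuclideanSpace.equiv ι ℝ).symm (μ • w) = μ • WithLp.toLp 2 w := rfl
  rw [e, norm_smul, Real.norm_eq_abs] at this
  exact le_of_mul_le_mul_right this hpos

section SignVectors

variable {ι : Type*}

def IsSignVector (δ : ι → ℝ) : Prop :=
  ∀ i, δ i = 1 ∨ δ i = -1

lemma IsSignVector.mul_self {δ : ι → ℝ} (hδ : IsSignVector δ) (i : ι) : δ i * δ i = 1 := by
  rcases hδ i with h | h <;> simp [h]

def IsSignRankOneOn (A : Matrix ι ι ℝ) (S : Finset ι) : Prop :=
  ∃ ε : ι → ℝ, IsSignVector ε ∧ ∀ i ∈ S, ∀ j ∈ S, i ≠ j → A i j = ε i * ε j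

lemma IsSignRankOneOn.mono {A : Matrix ι ι ℝ} {S T : Finset ι} (h : IsSignRankOneOn A S)
    (hTS : T ⊆ S) : IsSignRankOneOn A T :=
  let ⟨ε, hε, hA⟩ := h
  ⟨ε, hε, fun i hi j hj => hA i (hTS hi) j (hTS hj)⟩

variable [Fintype ι] [DecidableEq ι]

lemma diagonal_mul_mul_diagonal_apply (δ : ι → ℝ) (A : Matrix ι ι ℝ) (i j : ι) :
    (diagonal δ * A * diagonal δ) i j = δ i * A i j * δ j := by
  rw [mul_diagonal, diagonal_mul]

lemma IsSignVector.diagonal_mul_self {δ : ι → ℝ} (hδ : IsSignVector δ) :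
    diagonal δ * diagonal δ = 1 := by
  rw [diagonal_mul_diagonal, ← diagonal_one]
  exact congrArg diagonal (funext hδ.mul_self)

end SignVectors

structure IsGraphHadamard {ι : Type*} [Fintype ι] [DecidableEq ι] (H : Matrix ι ι ℝ) : Prop where
  transpose_eq : Hᵀ = H
  isSignVector_row : ∀ i, IsSignVector (H i)
  diag_eq_one : ∀ i, H i i = 1
  mul_self_eq : H * H = (Fintype.card ι : ℝ) • 1

namespace IsGraphHadamard

variable {ι : Type*} [Fintype ι] [DecidableEq ι] {H : Matrix ι ι ℝ}

lemma apply_comm (hH : IsGraphHadamard H) (i j : ι) : H i j = H j i := by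
  rw [← transpose_apply H j i, hH.transpose_eq]

lemma sum_row_mul_row (hH : IsGraphHadamard H) (i k : ι) :
    ∑ j, H i j * H k j = if i = k then (Fintype.card ι : ℝ) else 0 := by
  have := congrFun (congrFun hH.mul_self_eq i) k
  rw [mul_apply, Matrix.smul_apply, one_apply, smul_ite, smul_eq_mul, mul_one, smul_zero] at this
  rw [← this]
  exact sum_congr rfl fun j _ => by rw [hH.apply_comm k j]

lemma switch (hH : IsGraphHadamard H) {δ : ι → ℝ} (hδ : IsSignVector δ) :
    IsGraphHadamard (diagonal δ * H * diagonal δ) where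
  transpose_eq := by simp [transpose_mul, hH.transpose_eq, mul_assoc]
  isSignVector_row i j := by
    rw [diagonal_mul_mul_diagonal_apply]
    rcases hδ i with h | h <;> rcases hδ j with h' | h' <;>
      rcases hH.isSignVector_row i j with h'' | h'' <;> simp [h, h', h'']
  diag_eq_one i := by rw [diagonal_mul_mul_diagonal_apply, hH.diag_eq_one, mul_one, hδ.mul_self]
  mul_self_eq := by
    calc diagonal δ * H * diagonal δ * (diagonal δ * H * diagonal δ)
        = diagonal δ * (H * (diagonal δ * diagonal δ) * H) * diagonal δ := by
          simp only [Matrix.mul_assoc]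
      _ = (Fintype.card ι : ℝ) • 1 := by
          rw [hδ.diagonal_mul_self, Matrix.mul_one, hH.mul_self_eq, Matrix.mul_smul,
            Matrix.smul_mul, Matrix.mul_one, hδ.diagonal_mul_self]

lemma sum_row_eq_zero (hH : IsGraphHadamard H) {z : ι} (hz : ∀ j, H z j = 1) {i : ι}
    (hi : i ≠ z) : ∑ j, H i j = 0 := by
  simpa [hz, hi] using hH.sum_row_mul_row i z

lemma sum_one_sub_mul_one_sub (hH : IsGraphHadamard H) {z : ι} (hz : ∀ j, H z j = 1) {i k : ι}
    (hi : i ≠ z) (hk : k ≠ z) :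
    ∑ j, (1 - H i j) * (1 - H k j) =
      (Fintype.card ι : ℝ) + if i = k then (Fintype.card ι : ℝ) else 0 := by
  have e : ∀ j, (1 - H i j) * (1 - H k j) = 1 - H i j - H k j + H i j * H k j := fun j => by ring
  simp only [e, sum_add_distrib, sum_sub_distrib, hH.sum_row_eq_zero hz hi,
    hH.sum_row_eq_zero hz hk, hH.sum_row_mul_row, sum_const, card_univ, nsmul_eq_mul, mul_one,
    sub_zero]

lemma sq_card_add_one_le (hH : IsGraphHadamard H) {z : ι} (hz : ∀ j, H z j = 1)
    {C : Finset ι} (hzC : z ∉ C) (hC : ∀ x ∈ C, ∀ y ∈ C, H x y = 1) :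
    ((#C : ℝ) + 1) ^ 2 ≤ Fintype.card ι := by
  have hCz : ∀ x ∈ C, x ≠ z := fun x hx h => hzC (h ▸ hx)
  set a : ι → ℝ := fun j => ∑ x ∈ C, (1 - H x j) with ha
  have ha_zero : ∀ j ∈ insert z C, a j = 0 := by
    intro j hj
    refine sum_eq_zero fun x hx => ?_
    rcases mem_insert.mp hj with rfl | hj
    · rw [hH.apply_comm, hz, sub_self]
    · rw [hC x hx j hj, sub_self]
  have hsum : ∑ j, a j = #C * Fintype.card ι := by
    rw [ha, sum_comm, sum_congr rfl fun x hx => by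
      rw [sum_sub_distrib, hH.sum_row_eq_zero hz (hCz x hx), sub_zero]]
    simp
  have hsum_sq : ∑ j, a j ^ 2 = Fintype.card ι * #C * (#C + 1) := by
    calc ∑ j, a j ^ 2 = ∑ x ∈ C, ∑ y ∈ C, ∑ j, (1 - H x j) * (1 - H y j) := by
          simp only [ha, sq, sum_mul_sum]
          rw [sum_comm]
          exact sum_congr rfl fun x _ => sum_comm
      _ = ∑ x ∈ C, ∑ y ∈ C,
            ((Fintype.card ι : ℝ) + if x = y then (Fintype.card ι : ℝ) else 0) :=
          sum_congr rfl fun x hx => sum_congr rfl fun y hy =>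
            hH.sum_one_sub_mul_one_sub hz (hCz x hx) (hCz y hy)
      _ = Fintype.card ι * #C * (#C + 1) := by
          simp [sum_add_distrib, sum_ite_eq]
          ring
  have hcompl : ∀ f : ι → ℝ, (∀ j ∈ insert z C, f j = 0) → ∑ j ∈ (insert z C)ᶜ, f j = ∑ j, f j :=
    fun f hf => by rw [← sum_compl_add_sum (insert z C), sum_eq_zero hf, add_zero]
  have hcard : (#(insert z C)ᶜ : ℝ) + (#C + 1) = Fintype.card ι := by
    have := card_compl_add_card (insert z C)
    rw [card_insert_of_notMem hzC] at this
    exact_mod_cast this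
  have hCS := sq_sum_le_card_mul_sum_sq (s := (insert z C)ᶜ) (f := a)
  rw [hcompl a ha_zero, hcompl (a · ^ 2) fun j hj => by simp [ha_zero j hj], hsum, hsum_sq,
    eq_sub_of_add_eq hcard] at hCS
  rcases (Nat.cast_nonneg #C : (0 : ℝ) ≤ #C).eq_or_lt with hs | hs
  · rw [← hs] at hcard ⊢; nlinarith
  · have hN : (0 : ℝ) < Fintype.card ι := by nlinarith
    have : 0 ≤ (Fintype.card ι * #C : ℝ) * (Fintype.card ι - (#C + 1) ^ 2) := by nlinarith
    nlinarith [nonneg_of_mul_nonneg_right this (by positivity)]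

lemma exists_four_clique (hH : IsGraphHadamard H) (hn : 4 < Fintype.card ι) {z : ι}
    (hz : ∀ j, H z j = 1) :
    ∃ K : Finset ι, #K = 4 ∧ z ∉ K ∧ ∀ p ∈ K, ∀ q ∈ K, p ≠ q → H p q = -1 := by
  have hne : ∀ {p q}, H p q = -1 → p ≠ q := fun h e => by
    subst e; rw [hH.diag_eq_one] at h; norm_num at h
  have hnz : ∀ {p q}, H p q = -1 → q ≠ z := fun h e => by
    subst e; rw [hH.apply_comm, hz] at h; norm_num at h
  obtain ⟨u, hu⟩ := Fintype.exists_ne_of_one_lt_card (by omega) z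
  obtain ⟨v, huv⟩ : ∃ v, H u v = -1 := by
    by_contra! h
    have := hH.sum_row_eq_zero hz hu
    simp only [fun j => (hH.isSignVector_row u j).resolve_right (h j), sum_const, card_univ,
      nsmul_eq_mul, mul_one, Nat.cast_eq_zero] at this
    omega
  set C := univ.filter fun j => H u j = -1 ∧ H v j = -1
  have hC : 4 * (#C : ℝ) = Fintype.card ι := by
    have := hH.sum_one_sub_mul_one_sub hz hu (hnz huv)
    rw [if_neg (hne huv), add_zero] at this
    rw [← this, natCast_card_filter, mul_sum]
    refine sum_congr rfl fun j _ => ?_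
    rcases hH.isSignVector_row u j with h | h <;> rcases hH.isSignVector_row v j with h' | h' <;>
      simp [h, h'] <;> norm_num
  obtain ⟨x, hx, y, hy, hxy, hxy'⟩ : ∃ x ∈ C, ∃ y ∈ C, x ≠ y ∧ H x y = -1 := by
    by_contra! h
    have := hH.sq_card_add_one_le hz (fun h => hnz (mem_filter.mp h).2.1 rfl) fun x hx y hy =>
      if e : x = y then e ▸ hH.diag_eq_one x
      else (hH.isSignVector_row x y).resolve_right (h x hx y hy e)
    have h4 : (Fintype.card ι : ℝ) = 4 := by nlinarith
    norm_cast at h4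
    omega
  simp only [C, mem_filter, mem_univ, true_and] at hx hy
  obtain ⟨hux, hvx⟩ := hx
  obtain ⟨huy, hvy⟩ := hy
  refine ⟨{u, v, x, y}, card_eq_four.mpr ⟨u, v, x, y, hne huv, hne hux, hne huy, hne hvx,
    hne hvy, hxy, rfl⟩, ?_, ?_⟩
  · simp only [mem_insert, mem_singleton, not_or]
    exact ⟨hu.symm, (hnz huv).symm, (hnz hux).symm, (hnz huy).symm⟩
  · simp only [mem_insert, mem_singleton]
    rintro p (rfl | rfl | rfl | rfl) q (rfl | rfl | rfl | rfl) hpq <;>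
      first | exact absurd rfl hpq | assumption | (rw [hH.apply_comm]; assumption)

lemma exists_isSignRankOneOn_one_sub (hH : IsGraphHadamard H) (hn : 4 < Fintype.card ι) :
    ∃ S : Finset ι, #S = 5 ∧ IsSignRankOneOn (1 - H) S := by
  obtain ⟨z⟩ : Nonempty ι := Fintype.card_pos_iff.mp (by omega)
  have hδ := hH.isSignVector_row z
  obtain ⟨K, hK4, hzK, hK⟩ := (hH.switch hδ).exists_four_clique hn fun j => by
    rw [diagonal_mul_mul_diagonal_apply, hH.diag_eq_one, one_mul, hδ.mul_self]
  -- undo the switching by `H z`; `z` gets the opposite sign, being joined to no vertex of `K`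
  refine ⟨insert z K, by rw [card_insert_of_notMem hzK, hK4],
    fun p => if p = z then -H z p else H z p, fun p => ?_, ?_⟩
  · beta_reduce
    rcases hδ p with h | h <;> split_ifs <;> simp [h]
  · have hM : ∀ p q, H p q = H z p * (diagonal (H z) * H * diagonal (H z)) p q * H z q := by
      intro p q
      rw [diagonal_mul_mul_diagonal_apply]
      linear_combination (-(H p q * H z q * H z q)) * hδ.mul_self p - H p q * hδ.mul_self q
    intro p hp q hq hpq
    rw [Matrix.sub_apply, one_apply_ne hpq, zero_sub]
    beta_reduce
    rcases mem_insert.mp hp with rfl | hp <;> rcases mem_insert.mp hq with rfl | hq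
    · exact absurd rfl hpq
    · simp [hpq.symm, hH.diag_eq_one]
    · simp [hpq, hH.diag_eq_one, hH.apply_comm p]
    · rw [hM, hK p hp q hq hpq, if_neg (ne_of_mem_of_not_mem hp hzK),
        if_neg (ne_of_mem_of_not_mem hq hzK)]
      ring

end IsGraphHadamard

lemma sum_ite_eq_of_mem {α : Type*} [DecidableEq α] {S : Finset α} {i : α} (hi : i ∈ S)
    (a b : ℝ) : ∑ j ∈ S, (if i = j then a else b) = a + (#S - 1) * b := by
  rw [← add_sum_erase _ _ hi, if_pos rfl,
    sum_congr rfl fun j hj => if_neg (ne_of_mem_erase hj).symm, sum_const, card_erase_of_mem hi,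
    nsmul_eq_mul, Nat.cast_pred (card_pos.mpr ⟨i, hi⟩)]

lemma c_nonneg (n k : ℕ) : 0 ≤ c n k := Real.sqrt_nonneg _

lemma opNorm_mul_diagS_mul {n k : ℕ} (V : Matrix (Fin n) (Fin k) ℝ) (S : Finset (Fin n)) :
    opNorm (Vᵀ * diagS S * V) = ‖diagS S * (V * Vᵀ) * diagS S‖ := by
  have hD : (diagS S)ᵀ = diagS S := diagonal_transpose _
  have hDD : diagS S * diagS S = diagS S := by
    simp +contextual [diagS, diagonal_mul_diagonal]
  -- both sides are `‖diagS S * V‖ ^ 2`, by the C⋆-identity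
  have h1 : Vᵀ * diagS S * V = (diagS S * V)ᴴ * (diagS S * V) := by
    rw [conjTranspose_eq_transpose_of_trivial, transpose_mul, hD]
    simp only [Matrix.mul_assoc]
    rw [← Matrix.mul_assoc (diagS S) (diagS S), hDD]
  have h2 : diagS S * (V * Vᵀ) * diagS S = (diagS S * V)ᴴᴴ * (diagS S * V)ᴴ := by
    rw [conjTranspose_conjTranspose, conjTranspose_eq_transpose_of_trivial, transpose_mul, hD]
    simp only [Matrix.mul_assoc]
  rw [opNorm, ← cstar_norm_def, h1, h2, l2_opNorm_conjTranspose_mul_self,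
    l2_opNorm_conjTranspose_mul_self, l2_opNorm_conjTranspose]

namespace TwoUniformFrame

variable {n k : ℕ} (F : TwoUniformFrame n k)

lemma gram_apply (i j : Fin n) :
    (F.V * F.Vᵀ) i j = if i = j then (k : ℝ) / n else c n k * F.Q i j := by
  rw [F.gram]
  split_ifs with h
  · subst h; simp [F.diag]
  · simp [one_apply_ne h]

lemma abs_gram_apply (i j : Fin n) :
    |(F.V * F.Vᵀ) i j| = if i = j then (k : ℝ) / n else c n k := by
  rw [gram_apply]
  split_ifs with h
  · exact abs_of_nonneg (by positivity)
  · rcases F.offdiag i j h with hQ | hQ <;> simp [hQ, abs_of_nonneg (c_nonneg n k)]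

lemma sum_abs_diagS_mul_gram_mul_diagS (S : Finset (Fin n)) (i : Fin n) :
    ∑ j, |(diagS S * (F.V * F.Vᵀ) * diagS S) i j| =
      if i ∈ S then (k : ℝ) / n + (#S - 1) * c n k else 0 := by
  simp only [diagS, diagonal_mul_mul_diagonal_apply]
  split_ifs with hi
  · have hterm : ∀ j, |1 * (F.V * F.Vᵀ) i j * (if j ∈ S then 1 else 0)| =
        if j ∈ S then |(F.V * F.Vᵀ) i j| else 0 := fun j => by split_ifs <;> simp
    simp only [hterm, sum_ite_mem, univ_inter, F.abs_gram_apply, sum_ite_eq_of_mem hi]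
  · simp

lemma opNorm_le {S : Finset (Fin n)} (hS : S.Nonempty) :
    opNorm (F.Vᵀ * diagS S * F.V) ≤ (k : ℝ) / n + (#S - 1) * c n k := by
  have hB : 0 ≤ (k : ℝ) / n + (#S - 1) * c n k := by
    have : (1 : ℝ) ≤ #S := by exact_mod_cast card_pos.mpr hS
    have := c_nonneg n k
    positivity
  have hrow : ∀ i, ∑ j, |(diagS S * (F.V * F.Vᵀ) * diagS S) i j| ≤ (k : ℝ) / n + (#S - 1) * c n k :=
    fun i => by rw [F.sum_abs_diagS_mul_gram_mul_diagS]; split_ifs <;> simp [hB]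
  rw [opNorm_mul_diagS_mul]
  have hsymm : ∀ i j, |(diagS S * (F.V * F.Vᵀ) * diagS S) i j| =
      |(diagS S * (F.V * F.Vᵀ) * diagS S) j i| := fun i j => by
    simp only [diagS, diagonal_mul_mul_diagonal_apply, abs_mul, F.abs_gram_apply, eq_comm (a := i)]
    ring
  refine l2_opNorm_le_of_sum_abs_le _ hB hrow fun j => ?_
  simpa only [hsymm _ j] using hrow j

lemma opNorm_eq_of_isSignRankOneOn {S : Finset (Fin n)} (hS : S.Nonempty)
    (hQ : IsSignRankOneOn F.Q S) :
    opNorm (F.Vᵀ * diagS S * F.V) = (k : ℝ) / n + (#S - 1) * c n k := by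
  obtain ⟨ε, hε, hQε⟩ := hQ
  refine le_antisymm (F.opNorm_le hS) ?_
  obtain ⟨i₀, hi₀⟩ := hS
  set w : Fin n → ℝ := fun j => if j ∈ S then ε j else 0
  have hw : w ≠ 0 := fun h => by
    have := congrFun h i₀
    simp only [w, if_pos hi₀, Pi.zero_apply] at this
    rcases hε i₀ with h | h <;> simp [h] at this
  have heig : (diagS S * (F.V * F.Vᵀ) * diagS S) *ᵥ w =
      ((k : ℝ) / n + (#S - 1) * c n k) • w := by
    funext i
    simp only [mulVec, dotProduct, diagS, diagonal_mul_mul_diagonal_apply, Pi.smul_apply,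
      smul_eq_mul, w]
    split_ifs with hi
    · have hterm : ∀ j, 1 * (F.V * F.Vᵀ) i j * (if j ∈ S then 1 else 0) *
          (if j ∈ S then ε j else 0) =
          if j ∈ S then (if i = j then (k : ℝ) / n * ε i else c n k * ε i) else 0 := by
        intro j
        by_cases hj : j ∈ S
        · simp only [if_pos hj, one_mul, mul_one, F.gram_apply]
          split_ifs with hij
          · rw [hij]
          · rw [hQε i hi j hj hij, mul_assoc, mul_assoc, hε.mul_self, mul_one]
        · simp [hj]
      rw [sum_congr rfl fun j _ => hterm j, sum_ite_mem, univ_inter, sum_ite_eq_of_mem hi]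
      ring
    · simp
  rw [opNorm_mul_diagS_mul]
  exact (le_abs_self _).trans (abs_le_l2_opNorm_of_mulVec_eq_smul hw heig)

lemma errInf_eq_of_isSignRankOneOn {m : ℕ} (hm : 1 ≤ m) {S : Finset (Fin n)} (hS : #S = m)
    (hQ : IsSignRankOneOn F.Q S) : errInf F.V m = (k : ℝ) / n + (m - 1) * c n k := by
  have hne : ∀ {T : Finset (Fin n)}, #T = m → T.Nonempty := fun hT => card_pos.mp (by omega)
  refine IsGreatest.csSup_eq ⟨⟨S, hS, ?_⟩, ?_⟩
  · rw [F.opNorm_eq_of_isSignRankOneOn (hne hS) hQ, hS]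
  · rintro _ ⟨T, hT, rfl⟩
    simpa [hT] using F.opNorm_le (hne hT)

lemma isCompleteBipartite_induce {S : Finset (Fin n)} (hQ : IsSignRankOneOn F.Q S) :
    IsCompleteBipartite ((frameGraph F).induce (S : Set (Fin n))) := by
  obtain ⟨ε, hε, hQε⟩ := hQ
  refine ⟨{p | ε p = 1}, fun p q => ?_⟩
  show (p : Fin n) ≠ q ∧ F.Q p q = -1 ↔ _
  by_cases hpq : (p : Fin n) = q
  · simp [hpq]
  · rw [hQε p p.2 q q.2 hpq]
    rcases hε p with h | h <;> rcases hε q with h' | h' <;> simp [hpq, h, h'] <;> norm_num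

end TwoUniformFrame

theorem statement19_general (n : ℕ) (hn : 30 ≤ n)
    (H : Matrix (Fin n) (Fin n) ℝ) (hsym : Hᵀ = H)
    (hent : ∀ i j, H i j = 1 ∨ H i j = -1) (hdiag : ∀ i, H i i = 1)
    (hHad : H * H = (n : ℝ) • (1 : Matrix (Fin n) (Fin n) ℝ))
    (k : ℕ)
    (F : TwoUniformFrame n k) (hQ : F.Q = 1 - H) :
    HasInducedCompleteBipartite (frameGraph F) 5 ∧
    ∀ m : ℕ, 1 ≤ m → m ≤ 5 →
      errInf F.V m = (k : ℝ) / n + ((m : ℝ) - 1) * c n k := by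
  have hH : IsGraphHadamard H := ⟨hsym, hent, hdiag, by rwa [Fintype.card_fin]⟩
  obtain ⟨S, hS5, hSQ⟩ := hH.exists_isSignRankOneOn_one_sub (by rw [Fintype.card_fin]; omega)
  rw [← hQ] at hSQ
  refine ⟨⟨S, hS5, F.isCompleteBipartite_induce hSQ⟩, fun m hm1 hm5 => ?_⟩
  obtain ⟨T, hTS, hT⟩ := exists_subset_card_eq (hS5 ▸ hm5)
  exact F.errInf_eq_of_isSignRankOneOn hm1 hT (hSQ.mono hTS)

theorem statement19 (n : ℕ) (hn : 30 ≤ n)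
    (H : Matrix (Fin n) (Fin n) ℝ) (hsym : Hᵀ = H)
    (hent : ∀ i j, H i j = 1 ∨ H i j = -1) (hdiag : ∀ i, H i i = 1)
    (hHad : H * H = (n : ℝ) • (1 : Matrix (Fin n) (Fin n) ℝ))
    (k : ℕ) (hk : (k : ℝ) = ((n : ℝ) - Real.sqrt n) / 2)
    (F : TwoUniformFrame n k) (hQ : F.Q = 1 - H) :
    HasInducedCompleteBipartite (frameGraph F) 5 ∧
    ∀ m : ℕ, 1 ≤ m → m ≤ 5 →
      errInf F.V m = (k : ℝ) / n + ((m : ℝ) - 1) * c n k :=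
  statement19_general n hn H hsym hent hdiag hHad k F hQ

end FramesErasures
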